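/- Let H be a complex Hilbert space and A a densely defined self-adjoint operator in H which is negative, i.e. ⟨Ah, h⟩ < 0 for every nonzero h ∈ dom A. Suppose ψ : [0, ∞) → H is continuous on [0, ∞), continuously differentiable on (0, ∞), satisfies ψ(x) ∈ dom A and ψ′(x) = −Aψ(x) for all x > 0, and is bounded: sup_{x ≥ 0} ‖ψ(x)‖ < ∞. Then ψ(x) = 0 for all x ≥ 0. -/

import Mathlib

/-! For symmetric `A` the derivative of `t ↦ ⟪ψ (s - t), ψ t⟫` is
`⟪Aψ (s - t), ψ t⟫ - ⟪ψ (s - t), Aψ t⟫ = 0`, so this pairing is constant on `(0, s)`; comparing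
`t = s / 2` with `t = x` shows that `‖ψ‖` is midpoint log-convex on `(0, ∞)`. Negativity of `A`
gives `(‖ψ‖²)' = -2 Re⟪Aψ, ψ⟫ > 0` wherever `ψ ≠ 0`, so a nonzero value `ψ a` is followed by a
larger one `ψ b`. Along the progression `a + n (b - a)` log-convexity then forces `‖ψ‖` to grow
geometrically, contradicting boundedness. -/

open scoped ComplexOrder InnerProductSpace

noncomputable section

variable {H : Type*} [NormedAddCommGroup H] [InnerProductSpace ℂ H] [CompleteSpace H]

/-- `J` is a signature operator: `J = J* = J⁻¹`. -/
def IsSignatureOperator (J : H →L[ℂ] H) : Prop :=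
  IsSelfAdjoint J ∧ J.comp J = ContinuousLinearMap.id ℂ H

/-- The orthogonal projection onto `H₊ = ker (J - I)`, which equals `(I + J)/2`
for a signature operator `J`. -/
def Pplus (J : H →L[ℂ] H) : H →L[ℂ] H := (2⁻¹ : ℂ) • (ContinuousLinearMap.id ℂ H + J)

/-- The orthogonal projection onto `H₋ = ker (J + I)`, which equals `(I - J)/2`
for a signature operator `J`. -/
def Pminus (J : H →L[ℂ] H) : H →L[ℂ] H := (2⁻¹ : ℂ) • (ContinuousLinearMap.id ℂ H - J)

/-- The composition `J ∘ L` of a bounded operator `J` with an unbounded operator `L`,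
as an unbounded operator with the same domain as `L`. -/
def pmapComp (J : H →L[ℂ] H) (L : H →ₗ.[ℂ] H) : H →ₗ.[ℂ] H :=
  { domain := L.domain
    toFun := (J : H →ₗ[ℂ] H).comp L.toFun }

/-- `L` is a positive operator: `⟨L h, h⟩ > 0` for every nonzero `h ∈ dom L`. -/
def IsPositivePMap (L : H →ₗ.[ℂ] H) : Prop :=
  ∀ h : L.domain, (h : H) ≠ 0 → 0 < ⟪L h, (h : H)⟫_ℂ

/-- `B` is similar to a self-adjoint operator: there is a bounded operator `S` with bounded
inverse mapping `dom B` onto the domain of a self-adjoint operator `A` such that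
`A (S h) = S (B h)` for all `h ∈ dom B`. -/
def SimilarToSelfAdjoint (B : H →ₗ.[ℂ] H) : Prop :=
  ∃ (S : H ≃L[ℂ] H) (A : H →ₗ.[ℂ] H), IsSelfAdjoint A ∧
    (A.domain : Set H) = (fun h => S h) '' (B.domain : Set H) ∧
    ∀ (h : B.domain) (hSh : S (h : H) ∈ A.domain), A ⟨S (h : H), hSh⟩ = S (B h)

/-- `ψ` solves `ψ' = -B ψ + f` on the set `s` with a continuous derivative:
on `s`, `ψ` takes values in `dom B`, is differentiable with derivative `ψ'`,
`ψ'` is continuous on `s`, and `ψ' x = -B (ψ x) + f x`. -/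
def IsStrongSolutionOn (B : H →ₗ.[ℂ] H) (f : ℝ → H) (ψ : ℝ → H) (s : Set ℝ) : Prop :=
  ∃ ψ' : ℝ → H, ContinuousOn ψ' s ∧
    ∀ x ∈ s, HasDerivAt ψ (ψ' x) x ∧
      ∃ hx : ψ x ∈ B.domain, ψ' x = -(B ⟨ψ x, hx⟩) + f x

open Filter Topology Set

theorem IsSelfAdjoint.isFormalAdjoint_self {𝕜 E : Type*} [RCLike 𝕜] [NormedAddCommGroup E]
    [InnerProductSpace 𝕜 E] [CompleteSpace E] {A : E →ₗ.[𝕜] E} (hA : IsSelfAdjoint A) :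
    A.IsFormalAdjoint A := by
  simpa only [LinearPMap.isSelfAdjoint_def.mp hA] using A.adjoint_isFormalAdjoint hA.dense_domain

theorem HasDerivAt.exists_gt_lt_of_pos {g : ℝ → ℝ} {g' a : ℝ} (hg : HasDerivAt g g' a)
    (hg' : 0 < g') : ∃ b > a, g a < g b := by
  have hslope : ∀ᶠ b in 𝓝[>] a, 0 < slope g a b :=
    (hasDerivAt_iff_tendsto_slope.mp hg |>.mono_left (nhdsWithin_mono a fun _ hb => ne_of_gt hb))
      |>.eventually (eventually_gt_nhds hg')
  obtain ⟨b, hb, hab⟩ := (hslope.and self_mem_nhdsWithin).exists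
  exact ⟨b, hab, (slope_pos_iff_of_le (le_of_lt hab)).mp hb⟩

theorem tendsto_atTop_of_sq_le_mul {v : ℕ → ℝ} (hv : ∀ n, v (n + 1) ^ 2 ≤ v n * v (n + 2))
    (h0 : 0 < v 0) (h01 : v 0 < v 1) : Tendsto v atTop atTop := by
  set r := v 1 / v 0
  have hr : 1 < r := (one_lt_div h0).mpr h01
  have hstep : ∀ n, 0 < v n ∧ r * v n ≤ v (n + 1) := by
    intro n
    induction n with
    | zero => exact ⟨h0, (div_mul_cancel₀ _ h0.ne').le⟩
    | succ n ih =>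
      obtain ⟨hpos, hle⟩ := ih
      have hpos' : 0 < v (n + 1) := (mul_pos (zero_lt_one.trans hr) hpos).trans_le hle
      refine ⟨hpos', le_of_mul_le_mul_left ?_ hpos⟩
      calc v n * (r * v (n + 1)) = v (n + 1) * (r * v n) := by ring
        _ ≤ v (n + 1) * v (n + 1) := mul_le_mul_of_nonneg_left hle hpos'.le
        _ = v (n + 1) ^ 2 := (sq _).symm
        _ ≤ v n * v (n + 2) := hv n
  have hgeom : ∀ n, r ^ n * v 0 ≤ v n := by
    intro n
    induction n with
    | zero => simp
    | succ n ih =>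
      calc r ^ (n + 1) * v 0 = r * (r ^ n * v 0) := by ring
        _ ≤ r * v n := mul_le_mul_of_nonneg_left ih (by positivity)
        _ ≤ v (n + 1) := (hstep n).2
  exact tendsto_atTop_mono hgeom
    ((tendsto_pow_atTop_atTop_of_one_lt hr).atTop_mul_const h0)

section Evolution

variable {E : Type*} [NormedAddCommGroup E] [InnerProductSpace ℂ E]

def HasDerivEqNegOn (A : E →ₗ.[ℂ] E) (ψ : ℝ → E) (s : Set ℝ) : Prop :=
  ∀ x ∈ s, ∃ hx : ψ x ∈ A.domain, HasDerivAt ψ (-A ⟨ψ x, hx⟩) x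

variable {A : E →ₗ.[ℂ] E} {ψ : ℝ → E}

theorem IsStrongSolutionOn.hasDerivEqNegOn {s : Set ℝ}
    (h : IsStrongSolutionOn A (fun _ => 0) ψ s) : HasDerivEqNegOn A ψ s := by
  obtain ⟨ψ', -, hψ'⟩ := h
  intro x hx
  obtain ⟨hderiv, hdom, heq⟩ := hψ' x hx
  exact ⟨hdom, by simpa [heq] using hderiv⟩

namespace HasDerivEqNegOn

theorem hasDerivAt_inner_reflect (h : HasDerivEqNegOn A ψ (Ioi 0)) (hA : A.IsFormalAdjoint A)
    {s t : ℝ} (ht : t ∈ Ioo 0 s) : HasDerivAt (fun t => ⟪ψ (s - t), ψ t⟫_ℂ) 0 t := by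
  obtain ⟨hdom, hderiv⟩ := h t ht.1
  obtain ⟨hdom', hderiv'⟩ := h (s - t) (sub_pos.mpr ht.2)
  refine ((hderiv'.scomp t ((hasDerivAt_id t).const_sub s)).inner ℂ hderiv).congr_deriv ?_
  rw [neg_one_smul, neg_neg, inner_neg_right, hA ⟨ψ (s - t), hdom'⟩ ⟨ψ t, hdom⟩]
  simp only [Function.comp_apply, neg_add_cancel]

theorem inner_reflect_eq (h : HasDerivEqNegOn A ψ (Ioi 0)) (hA : A.IsFormalAdjoint A)
    {s t u : ℝ} (ht : t ∈ Ioo 0 s) (hu : u ∈ Ioo 0 s) :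
    ⟪ψ (s - t), ψ t⟫_ℂ = ⟪ψ (s - u), ψ u⟫_ℂ :=
  isOpen_Ioo.is_const_of_deriv_eq_zero isPreconnected_Ioo
    (fun _ hv => (h.hasDerivAt_inner_reflect hA hv).differentiableAt.differentiableWithinAt)
    (fun _ hv => (h.hasDerivAt_inner_reflect hA hv).deriv) ht hu

theorem norm_sq_midpoint_le (h : HasDerivEqNegOn A ψ (Ioi 0)) (hA : A.IsFormalAdjoint A)
    {x y : ℝ} (hx : 0 < x) (hy : 0 < y) : ‖ψ ((x + y) / 2)‖ ^ 2 ≤ ‖ψ x‖ * ‖ψ y‖ := by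
  have hmid : (x + y) / 2 ∈ Ioo 0 (x + y) := ⟨by linarith, by linarith⟩
  have heq := h.inner_reflect_eq hA hmid (⟨hx, by linarith⟩ : x ∈ Ioo 0 (x + y))
  rw [show x + y - (x + y) / 2 = (x + y) / 2 by ring, add_sub_cancel_left] at heq
  calc ‖ψ ((x + y) / 2)‖ ^ 2 = ‖⟪ψ y, ψ x⟫_ℂ‖ := by
        rw [← heq, ← inner_self_re_eq_norm, inner_self_eq_norm_sq]
    _ ≤ ‖ψ x‖ * ‖ψ y‖ := (norm_inner_le_norm _ _).trans_eq (mul_comm _ _)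

theorem exists_gt_norm_lt (h : HasDerivEqNegOn A ψ (Ioi 0))
    (hneg : ∀ v : A.domain, (v : E) ≠ 0 → ⟪A v, (v : E)⟫_ℂ < 0) {a : ℝ} (ha : 0 < a)
    (hψa : ψ a ≠ 0) : ∃ b > a, ‖ψ a‖ < ‖ψ b‖ := by
  obtain ⟨hdom, hderiv⟩ := h a ha
  let := InnerProductSpace.rclikeToReal ℂ E
  have hpos : 0 < 2 * ⟪ψ a, -A ⟨ψ a, hdom⟩⟫_ℝ := by
    have := (Complex.lt_def.mp (hneg ⟨ψ a, hdom⟩ hψa)).1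
    rw [real_inner_eq_re_inner ℂ, inner_neg_right, ← inner_conj_symm, RCLike.re_to_complex,
      Complex.neg_re, Complex.conj_re]
    simp only [Complex.zero_re] at this
    linarith
  obtain ⟨b, hab, hlt⟩ := hderiv.norm_sq.exists_gt_lt_of_pos hpos
  exact ⟨b, hab, (pow_lt_pow_iff_left₀ (norm_nonneg _) (norm_nonneg _) two_ne_zero).mp hlt⟩

theorem eqOn_zero_of_norm_le (h : HasDerivEqNegOn A ψ (Ioi 0)) (hA : A.IsFormalAdjoint A)
    (hneg : ∀ v : A.domain, (v : E) ≠ 0 → ⟪A v, (v : E)⟫_ℂ < 0) {C : ℝ}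
    (hC : ∀ x > 0, ‖ψ x‖ ≤ C) : EqOn ψ 0 (Ioi 0) := by
  intro a ha
  by_contra hψa
  obtain ⟨b, hab, hlt⟩ := h.exists_gt_norm_lt hneg ha hψa
  set X : ℕ → ℝ := fun n => a + n * (b - a)
  have hX : ∀ n, 0 < X n := fun n =>
    add_pos_of_pos_of_nonneg ha (mul_nonneg n.cast_nonneg (sub_nonneg.mpr hab.le))
  have hgrow : Tendsto (fun n => ‖ψ (X n)‖) atTop atTop := by
    refine tendsto_atTop_of_sq_le_mul (fun n => ?_) (by simpa [X] using norm_pos_iff.mpr hψa)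
      (by simpa [X] using hlt)
    have hmid : (X n + X (n + 2)) / 2 = X (n + 1) := by simp only [X]; push_cast; ring
    simpa only [hmid] using h.norm_sq_midpoint_le hA (hX n) (hX (n + 2))
  obtain ⟨n, hn⟩ := (hgrow.eventually_gt_atTop C).exists
  exact (hC (X n) (hX n)).not_gt hn

end HasDerivEqNegOn

end Evolution

theorem statement9_general (A : H →ₗ.[ℂ] H)
    (hsa : IsSelfAdjoint A)
    (hneg : ∀ h : A.domain, (h : H) ≠ 0 → ⟪A h, (h : H)⟫_ℂ < 0)
    (ψ : ℝ → H)
    (hcont : ContinuousOn ψ (Set.Ici 0))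
    (hsol : IsStrongSolutionOn A (fun _ => 0) ψ (Set.Ioi 0))
    (hbdd : ∃ C : ℝ, ∀ x ∈ Set.Ici (0 : ℝ), ‖ψ x‖ ≤ C) :
    ∀ x ∈ Set.Ici (0 : ℝ), ψ x = 0 := by
  obtain ⟨C, hC⟩ := hbdd
  have hzero : EqOn ψ 0 (Ioi 0) :=
    hsol.hasDerivEqNegOn.eqOn_zero_of_norm_le hsa.isFormalAdjoint_self hneg
      fun x hx => hC x (le_of_lt hx)
  exact fun x hx => hzero.of_subset_closure hcont continuousOn_const Ioi_subset_Ici_self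
    (closure_Ioi (0 : ℝ)).ge hx

/-- If `A` is a densely defined negative self-adjoint operator and `ψ` is a
bounded solution of `dψ/dx = -Aψ` on `(0, ∞)`, continuous on `[0, ∞)`, then `ψ ≡ 0`. -/
theorem statement9 (A : H →ₗ.[ℂ] H) (hdense : Dense (A.domain : Set H))
    (hsa : IsSelfAdjoint A)
    (hneg : ∀ h : A.domain, (h : H) ≠ 0 → ⟪A h, (h : H)⟫_ℂ < 0)
    (ψ : ℝ → H)
    (hcont : ContinuousOn ψ (Set.Ici 0))
    (hsol : IsStrongSolutionOn A (fun _ => 0) ψ (Set.Ioi 0))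
    (hbdd : ∃ C : ℝ, ∀ x ∈ Set.Ici (0 : ℝ), ‖ψ x‖ ≤ C) :
    ∀ x ∈ Set.Ici (0 : ℝ), ψ x = 0 :=
  statement9_general A hsa hneg ψ hcont hsol hbdd

end
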